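/- Let X = {x1 < x2 < ... < xn} ⊂ ℤ⁺. Then D_X is isomorphic to neither D_{X^1_n} nor D_{X^2_n} if and only if there exists j ∈ {1,...,n−2} such that x_j ≡ x_{j+1} ≡ x_{j+2} (mod 2), or x_j ≡ x_{j+2} (mod 2) and x_j ≢ x_{j+1} (mod 2). -/
import Mathlib


/-- Increasing enumeration (0-indexed) of `{6i-5, 6i-3, 6i-2, 6i | i ∈ ℤ⁺}`,
i.e. `1, 3, 4, 6, 7, 9, 10, 12, …`; the set `X¹ₙ` consists of `x1fun 0, …, x1fun (n-1)`. -/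
def x1fun (i : ℕ) : ℕ := 6 * (i / 4) + [1, 3, 4, 6].getD (i % 4) 0

/-- Increasing enumeration (0-indexed) of `{6i-5, 6i-4, 6i-2, 6i-1 | i ∈ ℤ⁺}`,
i.e. `1, 2, 4, 5, 7, 8, 10, 11, …`; the set `X²ₙ` consists of `x2fun 0, …, x2fun (n-1)`. -/
def x2fun (i : ℕ) : ℕ := 6 * (i / 4) + [1, 2, 4, 5].getD (i % 4) 0

private def Pfun (n : ℕ) (x : Fin n → ℕ) (i : ℕ) : ℕ :=
  if h : i < n then x ⟨i, h⟩ % 2 else 0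

private lemma x1_succ (m : ℕ) : x1fun m < x1fun (m + 1) := by
  rcases (by omega : m % 4 = 0 ∨ m % 4 = 1 ∨ m % 4 = 2 ∨ m % 4 = 3) with h|h|h|h
  · have h1 : (m+1) % 4 = 1 := by omega
    have h2 : (m+1) / 4 = m / 4 := by omega
    simp [x1fun, h, h1, h2] <;> omega
  · have h1 : (m+1) % 4 = 2 := by omega
    have h2 : (m+1) / 4 = m / 4 := by omega
    simp [x1fun, h, h1, h2] <;> omega
  · have h1 : (m+1) % 4 = 3 := by omega
    have h2 : (m+1) / 4 = m / 4 := by omega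
    simp [x1fun, h, h1, h2] <;> omega
  · have h1 : (m+1) % 4 = 0 := by omega
    have h2 : (m+1) / 4 = m / 4 + 1 := by omega
    simp [x1fun, h, h1, h2] <;> omega

private lemma x2_succ (m : ℕ) : x2fun m < x2fun (m + 1) := by
  rcases (by omega : m % 4 = 0 ∨ m % 4 = 1 ∨ m % 4 = 2 ∨ m % 4 = 3) with h|h|h|h
  · have h1 : (m+1) % 4 = 1 := by omega
    have h2 : (m+1) / 4 = m / 4 := by omega
    simp [x2fun, h, h1, h2] <;> omega
  · have h1 : (m+1) % 4 = 2 := by omega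
    have h2 : (m+1) / 4 = m / 4 := by omega
    simp [x2fun, h, h1, h2] <;> omega
  · have h1 : (m+1) % 4 = 3 := by omega
    have h2 : (m+1) / 4 = m / 4 := by omega
    simp [x2fun, h, h1, h2] <;> omega
  · have h1 : (m+1) % 4 = 0 := by omega
    have h2 : (m+1) / 4 = m / 4 + 1 := by omega
    simp [x2fun, h, h1, h2] <;> omega

private lemma x1_mono : StrictMono x1fun := strictMono_nat_of_lt_succ x1_succ
private lemma x2_mono : StrictMono x2fun := strictMono_nat_of_lt_succ x2_succ

private lemma x1_modlem (m : ℕ) : x1fun m % 2 = 1 ↔ m % 4 < 2 := by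
  rcases (by omega : m % 4 = 0 ∨ m % 4 = 1 ∨ m % 4 = 2 ∨ m % 4 = 3) with h|h|h|h <;>
    simp [x1fun, h] <;> omega

private lemma x2_modlem (m : ℕ) : x2fun m % 2 = 1 ↔ (m % 4 = 0 ∨ m % 4 = 3) := by
  rcases (by omega : m % 4 = 0 ∨ m % 4 = 1 ∨ m % 4 = 2 ∨ m % 4 = 3) with h|h|h|h <;>
    simp [x2fun, h] <;> omega

private lemma x1_good (m : ℕ) : x1fun m % 2 ≠ x1fun (m + 2) % 2 := by
  have h1 := x1_modlem m
  have h2 := x1_modlem (m + 2)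
  omega

private lemma x2_good (m : ℕ) : x2fun m % 2 ≠ x2fun (m + 2) % 2 := by
  have h1 := x2_modlem m
  have h2 := x2_modlem (m + 2)
  omega

/-- `D_X` (vertices `x 0 < ⋯ < x (n-1)`) is isomorphic to neither `D_{X¹ₙ}` nor
`D_{X²ₙ}` iff some three consecutive elements `x_j, x_{j+1}, x_{j+2}` are all of the
same parity, or satisfy `x_j ≡ x_{j+2} ≢ x_{j+1} (mod 2)`. -/
theorem stmt_13 (n : ℕ) (x : Fin n → ℕ) (hmono : StrictMono x) (hpos : ∀ i, 0 < x i) :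
    (∀ g : ℕ → ℕ, g = x1fun ∨ g = x2fun →
      ¬ ∃ e : Fin n ≃ Fin n, ∀ i j,
          (x i < x j ∧ x i % 2 ≠ x j % 2) ↔
            (g (e i) < g (e j) ∧ g (e i) % 2 ≠ g (e j) % 2)) ↔
    (∃ j : ℕ, ∃ hj : j + 2 < n,
      (x ⟨j, by omega⟩ % 2 = x ⟨j + 1, by omega⟩ % 2 ∧
        x ⟨j + 1, by omega⟩ % 2 = x ⟨j + 2, hj⟩ % 2) ∨
      (x ⟨j, by omega⟩ % 2 = x ⟨j + 2, hj⟩ % 2 ∧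
        x ⟨j, by omega⟩ % 2 ≠ x ⟨j + 1, by omega⟩ % 2)) := by
  constructor
  · -- hard-to-state direction: by contraposition, if no bad triple, build an isomorphism
    intro hL
    by_contra hR
    have hPx : ∀ (m : ℕ) (h : m < n), x ⟨m, h⟩ % 2 = Pfun n x m := by
      intro m h; simp [Pfun, h]
    have hPlt : ∀ m, Pfun n x m < 2 := by
      intro m
      by_cases h : m < n
      · rw [← hPx m h]; exact Nat.mod_lt _ (by norm_num)
      · simp [Pfun, h]
    have hgood : ∀ m, m + 2 < n → Pfun n x m ≠ Pfun n x (m + 2) := by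
      intro m h hne
      apply hR
      refine ⟨m, h, ?_⟩
      simp only [hPx]
      by_cases hb : Pfun n x (m + 1) = Pfun n x m
      · exact Or.inl ⟨hb.symm, hb.trans hne⟩
      · exact Or.inr ⟨hne, fun hh => hb hh.symm⟩
    obtain ⟨g, hg, hgm, hgg, hbase⟩ :
        ∃ g : ℕ → ℕ, (g = x1fun ∨ g = x2fun) ∧ StrictMono g ∧
          (∀ m, g m % 2 ≠ g (m + 2) % 2) ∧
          ((Pfun n x 0 = g 0 % 2) ↔ (Pfun n x 1 = g 1 % 2)) := by
      by_cases h01 : Pfun n x 0 = Pfun n x 1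
      · refine ⟨x1fun, Or.inl rfl, x1_mono, x1_good, ?_⟩
        have e0 : x1fun 0 % 2 = 1 := by decide
        have e1 : x1fun 1 % 2 = 1 := by decide
        rw [e0, e1]
        omega
      · refine ⟨x2fun, Or.inr rfl, x2_mono, x2_good, ?_⟩
        have e0 : x2fun 0 % 2 = 1 := by decide
        have e1 : x2fun 1 % 2 = 0 := by decide
        have l0 := hPlt 0
        have l1 := hPlt 1
        rw [e0, e1]
        omega
    have hkey : ∀ m, m < n → ((Pfun n x m = g m % 2) ↔ (Pfun n x 0 = g 0 % 2)) := by
      intro m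
      induction m using Nat.strong_induction_on with
      | _ m ih =>
        intro hm
        rcases m with _ | _ | m'
        · exact Iff.rfl
        · exact hbase.symm
        · have h1 := ih m' (by omega) (by omega)
          have h2 := hgood m' (by omega)
          have h3 := hgg m'
          have l1 := hPlt m'
          have l2 := hPlt (m' + 2)
          have hgl : g (m' + 2) % 2 < 2 := Nat.mod_lt _ (by norm_num)
          have hgl0 : g m' % 2 < 2 := Nat.mod_lt _ (by norm_num)
          show (Pfun n x (m' + 2) = g (m' + 2) % 2) ↔ (Pfun n x 0 = g 0 % 2)
          omega
    refine hL g hg ⟨Equiv.refl _, fun i j => ?_⟩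
    simp only [Equiv.refl_apply]
    have hx : x i < x j ↔ (i : ℕ) < (j : ℕ) := hmono.lt_iff_lt.trans Fin.lt_def
    have hgij : g ↑i < g ↑j ↔ (i : ℕ) < (j : ℕ) := hgm.lt_iff_lt
    have hpi : x i % 2 = Pfun n x ↑i := hPx i.1 i.2
    have hpj : x j % 2 = Pfun n x ↑j := hPx j.1 j.2
    have hki := hkey ↑i i.2
    have hkj := hkey ↑j j.2
    have l1 := hPlt ↑i
    have l2 := hPlt ↑j
    have l3 : g (↑i : ℕ) % 2 < 2 := Nat.mod_lt _ (by norm_num)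
    have l4 : g (↑j : ℕ) % 2 < 2 := Nat.mod_lt _ (by norm_num)
    rw [hx, hgij, hpi, hpj]
    omega
  · rintro ⟨j, hj, hc⟩ g hg ⟨e, he⟩
    obtain ⟨hgm, hgg⟩ : StrictMono g ∧ ∀ m, g m % 2 ≠ g (m + 2) % 2 := by
      rcases hg with rfl | rfl
      exacts [⟨x1_mono, x1_good⟩, ⟨x2_mono, x2_good⟩]
    obtain ⟨u, r, w, hu_val, hr_val, hw_val, hc'⟩ :
        ∃ u r w : Fin n, (u : ℕ) = j ∧ (r : ℕ) = j + 1 ∧ (w : ℕ) = j + 2 ∧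
          ((x u % 2 = x r % 2 ∧ x r % 2 = x w % 2) ∨
            (x u % 2 = x w % 2 ∧ x u % 2 ≠ x r % 2)) :=
      ⟨⟨j, by omega⟩, ⟨j + 1, by omega⟩, ⟨j + 2, hj⟩, rfl, rfl, rfl, hc⟩
    have hurv : u < r := by rw [Fin.lt_def]; omega
    have hrwv : r < w := by rw [Fin.lt_def]; omega
    have xur : x u < x r := hmono hurv
    have xrw : x r < x w := hmono hrwv
    have xuw : x u < x w := xur.trans xrw
    have huw : x u % 2 = x w % 2 := by
      rcases hc' with ⟨h1, h2⟩ | ⟨h1, _⟩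
      exacts [h1.trans h2, h1]
    have key : ∀ a b : Fin n, (a : ℕ) + 2 ≤ (b : ℕ) →
        ¬(g ↑a < g ↑b ∧ g ↑a % 2 ≠ g ↑b % 2) →
        (∀ v : Fin n, ¬((g ↑a < g ↑v ∧ g ↑a % 2 ≠ g ↑v % 2) ∧
          (g ↑v < g ↑b ∧ g ↑v % 2 ≠ g ↑b % 2))) → False := by
      intro a b hab hnab hno
      have hbn : (b : ℕ) < n := b.2
      have hno' : ∀ c : ℕ, c < n →
          ¬((g ↑a < g c ∧ g ↑a % 2 ≠ g c % 2) ∧ (g c < g ↑b ∧ g c % 2 ≠ g ↑b % 2)) :=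
        fun c hc => hno ⟨c, hc⟩
      have hglt : g ↑a < g ↑b := hgm (by omega : (a : ℕ) < (b : ℕ))
      have hq : g ↑a % 2 = g ↑b % 2 := by
        by_contra h; exact hnab ⟨hglt, h⟩
      have h2 : g ((a : ℕ) + 2) % 2 = g ↑a % 2 := by
        rcases Nat.eq_or_lt_of_le hab with h | h
        · rw [h]; exact hq.symm
        · by_contra hne
          exact hno' ((a : ℕ) + 2) (by omega)
            ⟨⟨hgm (by omega : (a : ℕ) < (a : ℕ) + 2), fun hh => hne hh.symm⟩,
             ⟨hgm h, fun hh => hne (hh.trans hq.symm)⟩⟩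
      exact hgg ↑a h2.symm
    by_cases hmid : x r % 2 = x u % 2
    · -- case A : three consecutive of the same parity
      have hbetween : ∀ v : Fin n, x u < x v → x v < x w → x v % 2 = x u % 2 := by
        intro v h1 h2
        have l1 : u < v := hmono.lt_iff_lt.mp h1
        have l2 : v < w := hmono.lt_iff_lt.mp h2
        rw [Fin.lt_def] at l1 l2
        have hv : v = r := Fin.ext (by omega)
        rw [hv]; exact hmid
      have hBno : ∀ s t : Fin n, x s % 2 = x t % 2 →
          ¬(g ↑(e s) < g ↑(e t) ∧ g ↑(e s) % 2 ≠ g ↑(e t) % 2) :=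
        fun s t hp hB => ((he s t).mpr hB).2 hp
      have hBno2 : ∀ s t : Fin n, x u ≤ x s → x t ≤ x w → x s % 2 = x u % 2 →
          ∀ v : Fin n, ¬((g ↑(e s) < g ↑v ∧ g ↑(e s) % 2 ≠ g ↑v % 2) ∧
            (g ↑v < g ↑(e t) ∧ g ↑v % 2 ≠ g ↑(e t) % 2)) := by
        intro s t hs ht hps v hB
        have h1 := (he s (e.symm v)).mpr (by rw [e.apply_symm_apply]; exact hB.1)
        have h2 := (he (e.symm v) t).mpr (by rw [e.apply_symm_apply]; exact hB.2)
        have hbv : x (e.symm v) % 2 = x u % 2 :=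
          hbetween _ (lt_of_le_of_lt hs h1.1) (lt_of_lt_of_le h2.1 ht)
        exact h1.2 (hps.trans hbv.symm)
      have d1 : (↑(e u) : ℕ) ≠ ↑(e r) := by
        intro h
        have h2 := congrArg Fin.val (e.injective (Fin.val_injective h))
        omega
      have d2 : (↑(e u) : ℕ) ≠ ↑(e w) := by
        intro h
        have h2 := congrArg Fin.val (e.injective (Fin.val_injective h))
        omega
      have d3 : (↑(e r) : ℕ) ≠ ↑(e w) := by
        intro h
        have h2 := congrArg Fin.val (e.injective (Fin.val_injective h))
        omega
      have c1 : ¬((↑(e u) : ℕ) + 2 ≤ ↑(e r)) :=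
        fun h => key _ _ h (hBno u r hmid.symm) (hBno2 u r le_rfl xrw.le rfl)
      have c2 : ¬((↑(e r) : ℕ) + 2 ≤ ↑(e u)) :=
        fun h => key _ _ h (hBno r u hmid) (hBno2 r u xur.le xuw.le hmid)
      have c3 : ¬((↑(e u) : ℕ) + 2 ≤ ↑(e w)) :=
        fun h => key _ _ h (hBno u w huw) (hBno2 u w le_rfl le_rfl rfl)
      have c4 : ¬((↑(e w) : ℕ) + 2 ≤ ↑(e u)) :=
        fun h => key _ _ h (hBno w u huw.symm) (hBno2 w u xuw.le xuw.le huw.symm)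
      have c5 : ¬((↑(e r) : ℕ) + 2 ≤ ↑(e w)) :=
        fun h => key _ _ h (hBno r w (hmid.trans huw)) (hBno2 r w xur.le le_rfl hmid)
      have c6 : ¬((↑(e w) : ℕ) + 2 ≤ ↑(e r)) :=
        fun h => key _ _ h (hBno w r (huw.symm.trans hmid.symm)) (hBno2 w r xuw.le xrw.le huw.symm)
      omega
    · -- case B : pattern aba
      have harc1 : x u < x r ∧ x u % 2 ≠ x r % 2 := ⟨xur, fun h => hmid h.symm⟩
      have harc2 : x r < x w ∧ x r % 2 ≠ x w % 2 := ⟨xrw, fun h => hmid (h.trans huw.symm)⟩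
      have hbet : ∀ v : Fin n, (x u < x v ∧ x u % 2 ≠ x v % 2) →
          (x v < x w ∧ x v % 2 ≠ x w % 2) → v = r := by
        intro v h1 h2
        have l1 : u < v := hmono.lt_iff_lt.mp h1.1
        have l2 : v < w := hmono.lt_iff_lt.mp h2.1
        rw [Fin.lt_def] at l1 l2
        exact Fin.ext (by omega)
      have hB1 := (he u r).mp harc1
      have hB2 := (he r w).mp harc2
      have hab : (↑(e u) : ℕ) < ↑(e r) := hgm.lt_iff_lt.mp hB1.1
      have hbc : (↑(e r) : ℕ) < ↑(e w) := hgm.lt_iff_lt.mp hB2.1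
      have hwn2 : (↑(e w) : ℕ) < n := (e w).2
      have hnoBuw : ¬(g ↑(e u) < g ↑(e w) ∧ g ↑(e u) % 2 ≠ g ↑(e w) % 2) :=
        fun hB => ((he u w).mpr hB).2 huw
      have hq_ac : g ↑(e u) % 2 = g ↑(e w) % 2 := by
        by_contra h
        exact hnoBuw ⟨hgm (by omega : (↑(e u) : ℕ) < ↑(e w)), h⟩
      have hBbet : ∀ v : Fin n, (g ↑(e u) < g ↑v ∧ g ↑(e u) % 2 ≠ g ↑v % 2) →
          (g ↑v < g ↑(e w) ∧ g ↑v % 2 ≠ g ↑(e w) % 2) → v = e r := by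
        intro v b1 b2
        have h1 := (he u (e.symm v)).mpr (by rw [e.apply_symm_apply]; exact b1)
        have h2 := (he (e.symm v) w).mpr (by rw [e.apply_symm_apply]; exact b2)
        have h3 : e.symm v = r := hbet _ h1 h2
        rw [← h3, e.apply_symm_apply]
      have hmidg : ∀ m : ℕ, (↑(e u) : ℕ) < m → m < ↑(e w) → m ≠ ↑(e r) →
          g m % 2 = g ↑(e u) % 2 := by
        intro m h1 h2 h3
        by_contra hne
        have hv := hBbet ⟨m, by omega⟩
          ⟨hgm h1, fun hh => hne hh.symm⟩
          ⟨hgm h2, fun hh => hne (hh.trans hq_ac.symm)⟩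
        exact h3 (congrArg Fin.val hv)
      have hm1 : g ((↑(e r) : ℕ) - 1) % 2 = g ↑(e u) % 2 := by
        by_cases h : (↑(e r) : ℕ) - 1 = ↑(e u)
        · rw [h]
        · exact hmidg _ (by omega) (by omega) (by omega)
      have hp1 : g ((↑(e r) : ℕ) + 1) % 2 = g ↑(e u) % 2 := by
        by_cases h : (↑(e r) : ℕ) + 1 = ↑(e w)
        · rw [h]; exact hq_ac.symm
        · exact hmidg _ (by omega) (by omega) (by omega)
      have hgg' := hgg ((↑(e r) : ℕ) - 1)
      rw [show (↑(e r) : ℕ) - 1 + 2 = ↑(e r) + 1 from by omega] at hgg'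
      exact hgg' (hm1.trans hp1.symm)
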